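/- Let β, γ ∈ [0,1), T > 0, and set κ = max(β, γ). There exists a modulus of continuity ω (depending only on β, γ, T) such that for any 0 ≤ t ≤ t' ≤ T, any k ∈ ℕ, and any continuous v : [t, t'] → ℝ^k, the function v̂(τ) = (τ - t)^κ ∫_t^τ (τ - ξ)^{-β} (ξ - t)^{-γ} v(ξ) dξ satisfies ‖v̂(τ') - v̂(τ)‖ ≤ ‖v‖_∞ · ω(|τ' - τ|) for all τ, τ' ∈ [t, t']. -/

import Mathlib

open MeasureTheory Set

/-!
Write `K_τ(ξ) = (τ - ξ)^(-β) (ξ - t)^(-γ)`, `M = ‖v‖_∞`, `d = τ' - τ ≥ 0` and `η = (1 - κ) / 2`.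
Then `v̂(τ') - v̂(τ)` is the sum of `((τ' - t)^κ - (τ - t)^κ) ∫_t^τ' K_τ' v`,
`(τ - t)^κ ∫_τ^τ' K_τ' v` and `(τ - t)^κ ∫_t^τ (K_τ' - K_τ) v`. Splitting at the midpoint, where
only one factor of the kernel is singular, gives the Beta-type bound
`∫_t^τ K_τ ≤ C (τ - t)^(1-β-γ)`. The inequality `s ≤ s^κ` on `[0, 1]` trades a factor `d^η` for
a loss of `η` in the exponent: `x'^κ - x^κ ≤ x'^(κ-η) d^η`, and
`(τ - ξ)^(-β) - (τ' - ξ)^(-β) ≤ d^η (τ - ξ)^(-(β+η))`, a kernel that is still integrable since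
`β + η < 1`. Each term is thus at most `M C d^η (τ' - t)^(1+κ-β-γ-η)`. This exponent is positive
because `κ ≥ γ`, which is how the weight `(τ - t)^κ` compensates the singularity of the
integral, and `τ' - t ≤ T` leaves the modulus `ω(δ) = C T^(1+κ-β-γ-η) δ^η`.
-/

lemma rpow_le_rpow_sub_mul_rpow {d x p η : ℝ} (hd : 0 ≤ d) (hdx : d ≤ x) (hη : 0 ≤ η)
    (hηp : η ≤ p) : d ^ p ≤ x ^ (p - η) * d ^ η := by
  obtain rfl | hp := (hη.trans hηp).eq_or_lt
  · obtain rfl : η = 0 := le_antisymm hηp hη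
    simp
  calc d ^ p = d ^ (p - η) * d ^ η := by
        rw [← Real.rpow_add' hd (by simpa using hp.ne'), sub_add_cancel]
    _ ≤ x ^ (p - η) * d ^ η := by gcongr

lemma rpow_sub_rpow_le {x y κ η : ℝ} (hy : 0 ≤ y) (hyx : y ≤ x) (hκ1 : κ ≤ 1)
    (hη0 : 0 ≤ η) (hη1 : η ≤ 1) : x ^ κ - y ^ κ ≤ x ^ (κ - η) * (x - y) ^ η := by
  obtain rfl | hx := (hy.trans hyx).eq_or_lt
  · obtain rfl : y = 0 := le_antisymm hyx hy
    simp only [sub_self]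
    positivity
  have hconc : x ^ (κ - 1) * y ≤ y ^ κ := by
    have h := Real.self_le_rpow_of_le_one (div_nonneg hy hx.le) (div_le_one_of_le₀ hyx hx.le) hκ1
    rw [Real.div_rpow hy hx.le, le_div_iff₀ (by positivity)] at h
    calc x ^ (κ - 1) * y = y / x * x ^ κ := by rw [Real.rpow_sub_one hx.ne']; ring
      _ ≤ y ^ κ := h
  calc x ^ κ - y ^ κ ≤ x ^ κ - x ^ (κ - 1) * y := by linarith
    _ = x ^ (κ - 1) * (x - y) := by rw [Real.rpow_sub_one hx.ne']; field_simp
    _ ≤ x ^ (κ - 1) * (x ^ (1 - η) * (x - y) ^ η) := by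
        gcongr
        simpa using rpow_le_rpow_sub_mul_rpow (sub_nonneg.2 hyx) (sub_le_self x hy) hη0 hη1
    _ = x ^ (κ - η) * (x - y) ^ η := by
        rw [← mul_assoc, ← Real.rpow_add hx]
        ring_nf

lemma rpow_neg_sub_rpow_neg_le {a c β η : ℝ} (ha : 0 < a) (hac : a ≤ c) (hβ1 : β ≤ 1) (hη0 : 0 ≤ η)
    (hη1 : η ≤ 1) :
    a ^ (-β) - c ^ (-β) ≤ a ^ (-(β + η)) * (c - a) ^ η := by
  have hc := ha.trans_le hac
  calc a ^ (-β) - c ^ (-β) = a ^ (-β) * c ^ (-β) * (c ^ β - a ^ β) := by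
        rw [Real.rpow_neg ha.le, Real.rpow_neg hc.le]
        field_simp
    _ ≤ a ^ (-β) * c ^ (-β) * (c ^ (β - η) * (c - a) ^ η) := by
        gcongr
        exact rpow_sub_rpow_le ha.le hac hβ1 hη0 hη1
    _ = a ^ (-β) * c ^ (-η) * (c - a) ^ η := by
        rw [← mul_assoc, mul_assoc _ (c ^ (-β)), ← Real.rpow_add hc]
        ring_nf
    _ ≤ a ^ (-β) * a ^ (-η) * (c - a) ^ η := by
        have := Real.rpow_le_rpow_of_nonpos ha hac (neg_nonpos.2 hη0)
        gcongr
    _ = a ^ (-(β + η)) * (c - a) ^ η := by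
        rw [← Real.rpow_add ha, neg_add]

lemma ae_restrict_Ioc_of_forall_Ioo {a b : ℝ} {P : ℝ → Prop} (h : ∀ ξ ∈ Ioo a b, P ξ) :
    ∀ᵐ ξ ∂volume.restrict (Ioc a b), P ξ := by
  rw [← Measure.restrict_congr_set Ioo_ae_eq_Ioc]
  exact ae_restrict_of_forall_mem measurableSet_Ioo h

lemma intervalIntegrable_sub_rpow {t c : ℝ} (a b : ℝ) (hc : -1 < c) :
    IntervalIntegrable (fun ξ => (ξ - t) ^ c) volume a b := by
  simpa using
    (intervalIntegral.intervalIntegrable_rpow' (a := a - t) (b := b - t) hc).comp_sub_right t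

lemma intervalIntegrable_rsub_rpow {x c : ℝ} (a b : ℝ) (hc : -1 < c) :
    IntervalIntegrable (fun ξ => (x - ξ) ^ c) volume a b := by
  simpa using
    (intervalIntegral.intervalIntegrable_rpow' (a := x - a) (b := x - b) hc).comp_sub_left x

lemma integral_sub_rpow {t x c : ℝ} (hc : -1 < c) :
    ∫ ξ in t..x, (ξ - t) ^ c = (x - t) ^ (c + 1) / (c + 1) := by
  rw [intervalIntegral.integral_comp_sub_right (fun ξ => ξ ^ c), sub_self,
    integral_rpow (Or.inl hc), Real.zero_rpow (by linarith), sub_zero]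

lemma integral_rsub_rpow {a x c : ℝ} (hc : -1 < c) :
    ∫ ξ in a..x, (x - ξ) ^ c = (x - a) ^ (c + 1) / (c + 1) := by
  rw [intervalIntegral.integral_comp_sub_left (fun ξ => ξ ^ c), sub_self,
    integral_rpow (Or.inl hc), Real.zero_rpow (by linarith), sub_zero]

noncomputable def singularKernel (β γ t τ ξ : ℝ) : ℝ := (τ - ξ) ^ (-β) * (ξ - t) ^ (-γ)

noncomputable def singularKernelBound (β γ : ℝ) : ℝ := 2 ^ β / (1 - γ) + 2 ^ γ / (1 - β)

section SingularKernel

variable {β γ t τ : ℝ}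

lemma singularKernel_nonneg {ξ : ℝ} (hξ : ξ ∈ Icc t τ) : 0 ≤ singularKernel β γ t τ ξ :=
  mul_nonneg (Real.rpow_nonneg (sub_nonneg.2 hξ.2) _) (Real.rpow_nonneg (sub_nonneg.2 hξ.1) _)

lemma measurable_singularKernel : Measurable (singularKernel β γ t τ) := by
  unfold singularKernel
  fun_prop

lemma singularKernel_le (hβ : 0 ≤ β) (hγ : 0 ≤ γ) {ξ : ℝ} (hξ : ξ ∈ Ioo t τ) :
    singularKernel β γ t τ ξ ≤
      ((τ - t) / 2) ^ (-β) * (ξ - t) ^ (-γ) + (τ - ξ) ^ (-β) * ((τ - t) / 2) ^ (-γ) := by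
  have hτξ : 0 < τ - ξ := sub_pos.2 hξ.2
  have hξt : 0 < ξ - t := sub_pos.2 hξ.1
  have hh : 0 < (τ - t) / 2 := by linarith
  unfold singularKernel
  rcases le_total (ξ - t) (τ - ξ) with h | h
  · have : (τ - ξ) ^ (-β) ≤ ((τ - t) / 2) ^ (-β) :=
      Real.rpow_le_rpow_of_nonpos hh (by linarith) (neg_nonpos.2 hβ)
    have : 0 ≤ (τ - ξ) ^ (-β) * ((τ - t) / 2) ^ (-γ) := by positivity
    have : 0 ≤ (ξ - t) ^ (-γ) := by positivity
    nlinarith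
  · have : (ξ - t) ^ (-γ) ≤ ((τ - t) / 2) ^ (-γ) :=
      Real.rpow_le_rpow_of_nonpos hh (by linarith) (neg_nonpos.2 hγ)
    have : 0 ≤ ((τ - t) / 2) ^ (-β) * (ξ - t) ^ (-γ) := by positivity
    have : 0 ≤ (τ - ξ) ^ (-β) := by positivity
    nlinarith

lemma intervalIntegrable_singularKernel_majorant (hβ1 : β < 1) (hγ1 : γ < 1) (m : ℝ) :
    IntervalIntegrable (fun ξ => m ^ (-β) * (ξ - t) ^ (-γ) + (τ - ξ) ^ (-β) * m ^ (-γ))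
      volume t τ :=
  ((intervalIntegrable_sub_rpow t τ (by linarith)).const_mul _).add
    ((intervalIntegrable_rsub_rpow t τ (by linarith)).mul_const _)

lemma intervalIntegrable_singularKernel (hβ0 : 0 ≤ β) (hβ1 : β < 1) (hγ0 : 0 ≤ γ) (hγ1 : γ < 1)
    (htτ : t ≤ τ) : IntervalIntegrable (singularKernel β γ t τ) volume t τ := by
  refine (intervalIntegrable_singularKernel_majorant hβ1 hγ1 ((τ - t) / 2)).mono_fun'
    measurable_singularKernel.aestronglyMeasurable ?_
  rw [uIoc_of_le htτ]
  refine ae_restrict_Ioc_of_forall_Ioo fun ξ hξ => ?_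
  beta_reduce
  rw [Real.norm_of_nonneg (singularKernel_nonneg (Ioo_subset_Icc_self hξ))]
  exact singularKernel_le hβ0 hγ0 hξ

lemma singularKernelBound_nonneg (hβ1 : β < 1) (hγ1 : γ < 1) : 0 ≤ singularKernelBound β γ := by
  unfold singularKernelBound
  have : 0 < 1 - β := by linarith
  have : 0 < 1 - γ := by linarith
  positivity

lemma integral_singularKernel_le (hβ0 : 0 ≤ β) (hβ1 : β < 1) (hγ0 : 0 ≤ γ) (hγ1 : γ < 1)
    (htτ : t ≤ τ) :
    ∫ ξ in t..τ, singularKernel β γ t τ ξ ≤ singularKernelBound β γ * (τ - t) ^ (1 - β - γ) := by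
  obtain rfl | hlt := htτ.eq_or_lt
  · rw [intervalIntegral.integral_same]
    exact mul_nonneg (singularKernelBound_nonneg hβ1 hγ1) (Real.rpow_nonneg (sub_self t).ge _)
  have hτt : 0 < τ - t := sub_pos.2 hlt
  have half : ∀ p q : ℝ,
      ((τ - t) / 2) ^ (-p) * (τ - t) ^ (1 - q) = 2 ^ p * (τ - t) ^ (1 - p - q) := by
    intro p q
    rw [Real.div_rpow hτt.le zero_le_two, Real.rpow_neg zero_le_two, div_inv_eq_mul,
      show 1 - p - q = -p + (1 - q) by ring, Real.rpow_add hτt]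
    ring
  calc ∫ ξ in t..τ, singularKernel β γ t τ ξ
      ≤ ∫ ξ in t..τ, (((τ - t) / 2) ^ (-β) * (ξ - t) ^ (-γ)
          + (τ - ξ) ^ (-β) * ((τ - t) / 2) ^ (-γ)) :=
        intervalIntegral.integral_mono_on_of_le_Ioo htτ
          (intervalIntegrable_singularKernel hβ0 hβ1 hγ0 hγ1 htτ)
          (intervalIntegrable_singularKernel_majorant hβ1 hγ1 _)
          fun ξ hξ => singularKernel_le hβ0 hγ0 hξ
    _ = ((τ - t) / 2) ^ (-β) * ((τ - t) ^ (1 - γ) / (1 - γ))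
          + ((τ - t) / 2) ^ (-γ) * ((τ - t) ^ (1 - β) / (1 - β)) := by
        rw [intervalIntegral.integral_add
            (intervalIntegrable_sub_rpow t τ (by linarith) |>.const_mul _)
            (intervalIntegrable_rsub_rpow t τ (by linarith) |>.mul_const _),
          intervalIntegral.integral_const_mul, intervalIntegral.integral_mul_const,
          integral_sub_rpow (by linarith), integral_rsub_rpow (by linarith)]
        ring_nf
    _ = singularKernelBound β γ * (τ - t) ^ (1 - β - γ) := by
        rw [mul_div_assoc', mul_div_assoc', half, half, singularKernelBound]
        ring_nf

end SingularKernel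

section Holder

variable {E : Type*} [NormedAddCommGroup E] [NormedSpace ℝ E] {β γ κ η t τ τ' M : ℝ}
  {v : ℝ → E}

lemma norm_integral_smul_le {K g : ℝ → ℝ} {a b : ℝ} (hab : a ≤ b)
    (hg : IntervalIntegrable g volume a b) (hKg : ∀ ξ ∈ Ioo a b, |K ξ| ≤ g ξ)
    (hv : ∀ ξ ∈ Ioo a b, ‖v ξ‖ ≤ M) :
    ‖∫ ξ in a..b, K ξ • v ξ‖ ≤ M * ∫ ξ in a..b, g ξ := by
  rw [← intervalIntegral.integral_const_mul]
  refine intervalIntegral.norm_integral_le_of_norm_le hab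
    ((ae_restrict_iff' measurableSet_Ioc).1 (ae_restrict_Ioc_of_forall_Ioo fun ξ hξ => ?_))
    (hg.const_mul M)
  rw [norm_smul, Real.norm_eq_abs, mul_comm M]
  exact mul_le_mul (hKg ξ hξ) (hv ξ hξ) (norm_nonneg _) ((abs_nonneg _).trans (hKg ξ hξ))

lemma intervalIntegrable_singularKernel_smul (hβ0 : 0 ≤ β) (hβ1 : β < 1) (hγ0 : 0 ≤ γ)
    (hγ1 : γ < 1) (htτ : t ≤ τ) (hv : ContinuousOn v (Icc t τ)) :
    IntervalIntegrable (fun ξ => singularKernel β γ t τ ξ • v ξ) volume t τ :=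
  (intervalIntegrable_singularKernel hβ0 hβ1 hγ0 hγ1 htτ).smul_continuousOn
    (by rwa [uIcc_of_le htτ])

noncomputable def weightedKernelIntegral (β γ κ t : ℝ) (v : ℝ → E) (τ : ℝ) : E :=
  (τ - t) ^ κ • ∫ ξ in t..τ, singularKernel β γ t τ ξ • v ξ

lemma weightedKernelIntegral_sub_eq (hβ0 : 0 ≤ β) (hβ1 : β < 1) (hγ0 : 0 ≤ γ)
    (hγ1 : γ < 1) (htτ : t ≤ τ) (hττ' : τ ≤ τ') (hv : ContinuousOn v (Icc t τ')) :
    weightedKernelIntegral β γ κ t v τ' - weightedKernelIntegral β γ κ t v τ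
      = ((τ' - t) ^ κ - (τ - t) ^ κ) • (∫ ξ in t..τ', singularKernel β γ t τ' ξ • v ξ)
        + (τ - t) ^ κ • (∫ ξ in τ..τ', singularKernel β γ t τ' ξ • v ξ)
        + (τ - t) ^ κ • ∫ ξ in t..τ,
            (singularKernel β γ t τ' ξ - singularKernel β γ t τ ξ) • v ξ := by
  have htτ' := htτ.trans hττ'
  have h' := intervalIntegrable_singularKernel_smul hβ0 hβ1 hγ0 hγ1 htτ' hv
  have h := intervalIntegrable_singularKernel_smul hβ0 hβ1 hγ0 hγ1 htτ
    (hv.mono (Icc_subset_Icc_right hττ'))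
  have h'₁ : IntervalIntegrable (fun ξ => singularKernel β γ t τ' ξ • v ξ) volume t τ :=
    h'.mono_set (by rw [uIcc_of_le htτ, uIcc_of_le htτ']; exact Icc_subset_Icc_right hττ')
  have h'₂ : IntervalIntegrable (fun ξ => singularKernel β γ t τ' ξ • v ξ) volume τ τ' :=
    h'.mono_set (by rw [uIcc_of_le hττ', uIcc_of_le htτ']; exact Icc_subset_Icc_left htτ)
  simp_rw [weightedKernelIntegral, sub_smul]
  rw [intervalIntegral.integral_sub h'₁ h,
    ← intervalIntegral.integral_add_adjacent_intervals h'₁ h'₂]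
  module

lemma norm_rpow_sub_rpow_smul_integral_singularKernel_le (hβ0 : 0 ≤ β) (hβ1 : β < 1)
    (hγ0 : 0 ≤ γ) (hγ1 : γ < 1) (hκ0 : 0 ≤ κ) (hκ1 : κ ≤ 1) (hη0 : 0 ≤ η) (hη1 : η ≤ 1)
    (hexp : 0 < 1 + κ - β - γ - η) (htτ : t ≤ τ) (hττ' : τ ≤ τ') (hM0 : 0 ≤ M)
    (hM : ∀ ξ ∈ Ioo t τ', ‖v ξ‖ ≤ M) :
    ‖((τ' - t) ^ κ - (τ - t) ^ κ) • ∫ ξ in t..τ', singularKernel β γ t τ' ξ • v ξ‖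
      ≤ M * singularKernelBound β γ * (τ' - t) ^ (1 + κ - β - γ - η) * (τ' - τ) ^ η := by
  have htτ' := htτ.trans hττ'
  have hI : ‖∫ ξ in t..τ', singularKernel β γ t τ' ξ • v ξ‖
      ≤ M * (singularKernelBound β γ * (τ' - t) ^ (1 - β - γ)) :=
    (norm_integral_smul_le htτ' (intervalIntegrable_singularKernel hβ0 hβ1 hγ0 hγ1 htτ')
      (fun ξ hξ => (abs_of_nonneg (singularKernel_nonneg (Ioo_subset_Icc_self hξ))).le) hM).trans
      (mul_le_mul_of_nonneg_left (integral_singularKernel_le hβ0 hβ1 hγ0 hγ1 htτ') hM0)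
  have hc : |(τ' - t) ^ κ - (τ - t) ^ κ| ≤ (τ' - t) ^ (κ - η) * (τ' - τ) ^ η := by
    rw [abs_of_nonneg (sub_nonneg.2 (Real.rpow_le_rpow (sub_nonneg.2 htτ) (by linarith) hκ0))]
    simpa using rpow_sub_rpow_le (sub_nonneg.2 htτ) (by linarith : τ - t ≤ τ' - t) hκ1 hη0 hη1
  rw [norm_smul, Real.norm_eq_abs]
  calc |(τ' - t) ^ κ - (τ - t) ^ κ| * ‖∫ ξ in t..τ', singularKernel β γ t τ' ξ • v ξ‖
      ≤ (τ' - t) ^ (κ - η) * (τ' - τ) ^ η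
          * (M * (singularKernelBound β γ * (τ' - t) ^ (1 - β - γ))) :=
        mul_le_mul hc hI (norm_nonneg _)
          (mul_nonneg (Real.rpow_nonneg (sub_nonneg.2 htτ') _)
            (Real.rpow_nonneg (sub_nonneg.2 hττ') _))
    _ = M * singularKernelBound β γ * ((τ' - t) ^ (κ - η) * (τ' - t) ^ (1 - β - γ))
          * (τ' - τ) ^ η := by ring
    _ = M * singularKernelBound β γ * (τ' - t) ^ (1 + κ - β - γ - η) * (τ' - τ) ^ η := by
        rw [← Real.rpow_add' (sub_nonneg.2 htτ') (by linarith)]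
        ring_nf

lemma norm_rpow_smul_integral_singularKernel_right_le (hβ1 : β < 1) (hγ0 : 0 ≤ γ)
    (hγκ : γ ≤ κ) (hη0 : 0 ≤ η) (hβη : β + η < 1) (htτ : t ≤ τ) (hττ' : τ ≤ τ') (hM0 : 0 ≤ M)
    (hM : ∀ ξ ∈ Ioo τ τ', ‖v ξ‖ ≤ M) :
    ‖(τ - t) ^ κ • ∫ ξ in τ..τ', singularKernel β γ t τ' ξ • v ξ‖
      ≤ M * (1 / (1 - β)) * (τ' - t) ^ (1 + κ - β - γ - η) * (τ' - τ) ^ η := by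
  have htτ' := htτ.trans hττ'
  have hpoint : ∀ ξ ∈ Ioo τ τ', |(τ - t) ^ κ * singularKernel β γ t τ' ξ|
      ≤ (τ' - t) ^ (κ - γ) * (τ' - ξ) ^ (-β) := by
    intro ξ hξ
    have hξt : 0 < ξ - t := by linarith [hξ.1]
    have hK : 0 ≤ (τ' - ξ) ^ (-β) := Real.rpow_nonneg (by linarith [hξ.2]) _
    unfold singularKernel
    rw [abs_of_nonneg (mul_nonneg (Real.rpow_nonneg (sub_nonneg.2 htτ) _)
      (mul_nonneg hK (Real.rpow_nonneg hξt.le _)))]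
    calc (τ - t) ^ κ * ((τ' - ξ) ^ (-β) * (ξ - t) ^ (-γ))
        ≤ (ξ - t) ^ κ * (ξ - t) ^ (-γ) * (τ' - ξ) ^ (-β) := by
          rw [mul_comm ((τ' - ξ) ^ (-β)), ← mul_assoc]
          gcongr
          · linarith [hγ0.trans hγκ]
          · linarith [hξ.1]
      _ = (ξ - t) ^ (κ - γ) * (τ' - ξ) ^ (-β) := by
          rw [← Real.rpow_add hξt, ← sub_eq_add_neg]
      _ ≤ (τ' - t) ^ (κ - γ) * (τ' - ξ) ^ (-β) := by
          gcongr
          linarith [hξ.2]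
  rw [← intervalIntegral.integral_smul]
  simp_rw [smul_smul]
  calc ‖∫ ξ in τ..τ', ((τ - t) ^ κ * singularKernel β γ t τ' ξ) • v ξ‖
      ≤ M * ∫ ξ in τ..τ', (τ' - t) ^ (κ - γ) * (τ' - ξ) ^ (-β) :=
        norm_integral_smul_le hττ'
          ((intervalIntegrable_rsub_rpow τ τ' (by linarith)).const_mul _) hpoint hM
    _ = M * ((τ' - t) ^ (κ - γ) * ((τ' - τ) ^ (1 - β) / (1 - β))) := by
        rw [intervalIntegral.integral_const_mul, integral_rsub_rpow (by linarith)]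
        ring_nf
    _ ≤ M * ((τ' - t) ^ (κ - γ) * ((τ' - t) ^ (1 - β - η) * (τ' - τ) ^ η / (1 - β))) := by
        gcongr
        exact rpow_le_rpow_sub_mul_rpow (sub_nonneg.2 hττ') (by linarith) hη0 (by linarith)
    _ = M * (1 / (1 - β)) * ((τ' - t) ^ (κ - γ) * (τ' - t) ^ (1 - β - η)) * (τ' - τ) ^ η := by
        ring
    _ = M * (1 / (1 - β)) * (τ' - t) ^ (1 + κ - β - γ - η) * (τ' - τ) ^ η := by
        rw [← Real.rpow_add' (sub_nonneg.2 htτ') (by linarith)]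
        ring_nf

lemma norm_rpow_smul_integral_singularKernel_sub_le (hβ0 : 0 ≤ β) (hγ0 : 0 ≤ γ) (hγ1 : γ < 1)
    (hη0 : 0 ≤ η) (hβη : β + η < 1) (hexp : 0 < 1 + κ - β - γ - η)
    (htτ : t ≤ τ) (hττ' : τ ≤ τ') (hM0 : 0 ≤ M) (hM : ∀ ξ ∈ Ioo t τ, ‖v ξ‖ ≤ M) :
    ‖(τ - t) ^ κ • ∫ ξ in t..τ,
        (singularKernel β γ t τ' ξ - singularKernel β γ t τ ξ) • v ξ‖
      ≤ M * singularKernelBound (β + η) γ * (τ' - t) ^ (1 + κ - β - γ - η) * (τ' - τ) ^ η := by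
  have hβη0 : 0 ≤ β + η := by linarith
  have hpoint : ∀ ξ ∈ Ioo t τ, |singularKernel β γ t τ' ξ - singularKernel β γ t τ ξ|
      ≤ (τ' - τ) ^ η * singularKernel (β + η) γ t τ ξ := by
    intro ξ hξ
    have hτξ : 0 < τ - ξ := by linarith [hξ.2]
    have hξt : 0 < ξ - t := by linarith [hξ.1]
    have hmono : (τ' - ξ) ^ (-β) ≤ (τ - ξ) ^ (-β) :=
      Real.rpow_le_rpow_of_nonpos hτξ (by linarith) (neg_nonpos.2 hβ0)
    have hdiff := rpow_neg_sub_rpow_neg_le (β := β) hτξ (by linarith : τ - ξ ≤ τ' - ξ)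
      (by linarith) hη0 (by linarith)
    rw [sub_sub_sub_cancel_right] at hdiff
    unfold singularKernel
    rw [← sub_mul, abs_mul, abs_of_nonpos (sub_nonpos.2 hmono),
      abs_of_nonneg (Real.rpow_nonneg hξt.le _), neg_sub]
    calc ((τ - ξ) ^ (-β) - (τ' - ξ) ^ (-β)) * (ξ - t) ^ (-γ)
        ≤ (τ - ξ) ^ (-(β + η)) * (τ' - τ) ^ η * (ξ - t) ^ (-γ) := by
          gcongr
      _ = (τ' - τ) ^ η * ((τ - ξ) ^ (-(β + η)) * (ξ - t) ^ (-γ)) := by ring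
  have hJ : ‖∫ ξ in t..τ, (singularKernel β γ t τ' ξ - singularKernel β γ t τ ξ) • v ξ‖
      ≤ M * ((τ' - τ) ^ η * (singularKernelBound (β + η) γ * (τ - t) ^ (1 - (β + η) - γ))) := by
    refine (norm_integral_smul_le htτ
      ((intervalIntegrable_singularKernel hβη0 hβη hγ0 hγ1 htτ).const_mul _) hpoint hM).trans ?_
    rw [intervalIntegral.integral_const_mul]
    gcongr
    exact integral_singularKernel_le hβη0 hβη hγ0 hγ1 htτ
  have hB := singularKernelBound_nonneg hβη hγ1
  rw [norm_smul, Real.norm_of_nonneg (Real.rpow_nonneg (sub_nonneg.2 htτ) _)]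
  calc (τ - t) ^ κ * ‖∫ ξ in t..τ,
        (singularKernel β γ t τ' ξ - singularKernel β γ t τ ξ) • v ξ‖
      ≤ (τ - t) ^ κ * (M * ((τ' - τ) ^ η
          * (singularKernelBound (β + η) γ * (τ - t) ^ (1 - (β + η) - γ)))) :=
        mul_le_mul_of_nonneg_left hJ (Real.rpow_nonneg (sub_nonneg.2 htτ) _)
    _ = M * singularKernelBound (β + η) γ * ((τ - t) ^ κ * (τ - t) ^ (1 - (β + η) - γ))
          * (τ' - τ) ^ η := by ring
    _ = M * singularKernelBound (β + η) γ * (τ - t) ^ (1 + κ - β - γ - η) * (τ' - τ) ^ η := by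
        rw [← Real.rpow_add' (sub_nonneg.2 htτ) (by linarith)]
        ring_nf
    _ ≤ M * singularKernelBound (β + η) γ * (τ' - t) ^ (1 + κ - β - γ - η) * (τ' - τ) ^ η := by
        gcongr

noncomputable def holderConst (β γ η : ℝ) : ℝ :=
  singularKernelBound β γ + 1 / (1 - β) + singularKernelBound (β + η) γ

lemma holderConst_nonneg (hη0 : 0 ≤ η) (hβη : β + η < 1) (hγ1 : γ < 1) :
    0 ≤ holderConst β γ η := by
  have : 0 < 1 - β := by linarith
  have := singularKernelBound_nonneg (β := β) (by linarith) hγ1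
  have := singularKernelBound_nonneg hβη hγ1
  unfold holderConst
  positivity

theorem norm_weightedKernelIntegral_sub_le (hβ0 : 0 ≤ β) (hγ0 : 0 ≤ γ)
    (hγ1 : γ < 1) (hγκ : γ ≤ κ) (hκ1 : κ ≤ 1) (hη0 : 0 ≤ η) (hβη : β + η < 1) (htτ : t ≤ τ)
    (hττ' : τ ≤ τ') (hv : ContinuousOn v (Icc t τ')) (hM : ∀ ξ ∈ Icc t τ', ‖v ξ‖ ≤ M) :
    ‖weightedKernelIntegral β γ κ t v τ' - weightedKernelIntegral β γ κ t v τ‖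
      ≤ M * holderConst β γ η * (τ' - t) ^ (1 + κ - β - γ - η) * (τ' - τ) ^ η := by
  have hβ1 : β < 1 := by linarith
  have hκ0 : 0 ≤ κ := hγ0.trans hγκ
  have hexp : 0 < 1 + κ - β - γ - η := by linarith
  have hM0 : 0 ≤ M := (norm_nonneg _).trans (hM t ⟨le_rfl, htτ.trans hττ'⟩)
  have hMIoo : ∀ {a b}, t ≤ a → b ≤ τ' → ∀ ξ ∈ Ioo a b, ‖v ξ‖ ≤ M :=
    fun ha hb ξ hξ => hM ξ ⟨ha.trans hξ.1.le, hξ.2.le.trans hb⟩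
  rw [weightedKernelIntegral_sub_eq hβ0 hβ1 hγ0 hγ1 htτ hττ' hv]
  refine norm_add₃_le.trans ?_
  calc _ ≤ M * singularKernelBound β γ * (τ' - t) ^ (1 + κ - β - γ - η) * (τ' - τ) ^ η
          + M * (1 / (1 - β)) * (τ' - t) ^ (1 + κ - β - γ - η) * (τ' - τ) ^ η
          + M * singularKernelBound (β + η) γ * (τ' - t) ^ (1 + κ - β - γ - η) * (τ' - τ) ^ η :=
        add_le_add_three
          (norm_rpow_sub_rpow_smul_integral_singularKernel_le hβ0 hβ1 hγ0 hγ1 hκ0 hκ1 hη0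
            (by linarith) hexp htτ hττ' hM0 (hMIoo le_rfl le_rfl))
          (norm_rpow_smul_integral_singularKernel_right_le hβ1 hγ0 hγκ hη0 hβη htτ hττ' hM0
            (hMIoo htτ le_rfl))
          (norm_rpow_smul_integral_singularKernel_sub_le hβ0 hγ0 hγ1 hη0 hβη hexp htτ hττ' hM0
            (hMIoo le_rfl hττ'))
    _ = M * holderConst β γ η * (τ' - t) ^ (1 + κ - β - γ - η) * (τ' - τ) ^ η := by
        unfold holderConst
        ring

end Holder

noncomputable def powerModulus (C η δ : ℝ) : ℝ := C * max δ 0 ^ η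

section PowerModulus

variable {C η : ℝ}

lemma continuous_powerModulus (hη : 0 ≤ η) : Continuous (powerModulus C η) :=
  continuous_const.mul ((continuous_id.max continuous_const).rpow_const fun _ => Or.inr hη)

lemma monotone_powerModulus (hC : 0 ≤ C) (hη : 0 ≤ η) : Monotone (powerModulus C η) :=
  fun _ _ h => by
    unfold powerModulus
    gcongr

lemma powerModulus_zero (hη : η ≠ 0) : powerModulus C η 0 = 0 := by
  simp [powerModulus, Real.zero_rpow hη]

lemma powerModulus_nonneg (hC : 0 ≤ C) (δ : ℝ) : 0 ≤ powerModulus C η δ :=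
  mul_nonneg hC (Real.rpow_nonneg (le_max_right _ _) _)

end PowerModulus

theorem norm_weightedKernelIntegral_sub_le_powerModulus {E : Type*}
    [NormedAddCommGroup E] [NormedSpace ℝ E] {β γ κ η T t τ τ' M : ℝ} {v : ℝ → E}
    (hβ0 : 0 ≤ β) (hγ0 : 0 ≤ γ) (hγ1 : γ < 1) (hγκ : γ ≤ κ) (hκ1 : κ ≤ 1) (hη0 : 0 ≤ η)
    (hβη : β + η < 1) (ht0 : 0 ≤ t) (htτ : t ≤ τ) (hττ' : τ ≤ τ') (hτ'T : τ' ≤ T)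
    (hv : ContinuousOn v (Icc t τ')) (hM : ∀ ξ ∈ Icc t τ', ‖v ξ‖ ≤ M) :
    ‖weightedKernelIntegral β γ κ t v τ' - weightedKernelIntegral β γ κ t v τ‖
      ≤ M * powerModulus (holderConst β γ η * T ^ (1 + κ - β - γ - η)) η (τ' - τ) := by
  have hM0 : 0 ≤ M := (norm_nonneg _).trans (hM t ⟨le_rfl, htτ.trans hττ'⟩)
  refine (norm_weightedKernelIntegral_sub_le hβ0 hγ0 hγ1 hγκ hκ1 hη0 hβη htτ hττ' hv
    hM).trans ?_
  rw [powerModulus, max_eq_left (sub_nonneg.2 hττ'), ← mul_assoc, ← mul_assoc]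
  have := holderConst_nonneg hη0 hβη hγ1
  gcongr <;> linarith

/-- Uniform equicontinuity, with a modulus depending only on `β`, `γ`, `T`, of
`v̂(τ) = (τ-t)^{max(β,γ)} ∫_t^τ (τ-ξ)^{-β} (ξ-t)^{-γ} v(ξ) dξ`. -/
theorem stmt5 (T β γ : ℝ) (hT : 0 < T) (hβ : β ∈ Set.Ico (0 : ℝ) 1)
    (hγ : γ ∈ Set.Ico (0 : ℝ) 1) :
    ∃ ω : ℝ → ℝ, Continuous ω ∧ Monotone ω ∧ ω 0 = 0 ∧ (∀ δ, 0 ≤ ω δ) ∧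
      ∀ t t' : ℝ, 0 ≤ t → t ≤ t' → t' ≤ T →
        ∀ (k : ℕ) (v : ℝ → EuclideanSpace ℝ (Fin k)), ContinuousOn v (Set.Icc t t') →
          ∀ τ ∈ Set.Icc t t', ∀ τ' ∈ Set.Icc t t',
            ‖((τ' - t) ^ (max β γ)) •
                  (∫ ξ in t..τ', ((τ' - ξ) ^ (-β) * (ξ - t) ^ (-γ)) • v ξ) -
                ((τ - t) ^ (max β γ)) •
                  ∫ ξ in t..τ, ((τ - ξ) ^ (-β) * (ξ - t) ^ (-γ)) • v ξ‖ ≤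
              sSup ((fun ξ => ‖v ξ‖) '' Set.Icc t t') * ω (|τ' - τ|) := by
  obtain ⟨hβ0, hβ1⟩ := hβ
  obtain ⟨hγ0, hγ1⟩ := hγ
  have hκ1 : max β γ < 1 := max_lt hβ1 hγ1
  have hβη : β + (1 - max β γ) / 2 < 1 := by linarith [le_max_left β γ]
  have hη0 : 0 < (1 - max β γ) / 2 := by linarith
  have hC := mul_nonneg (holderConst_nonneg hη0.le hβη hγ1)
    (Real.rpow_nonneg hT.le (1 + max β γ - β - γ - (1 - max β γ) / 2))
  refine ⟨_, continuous_powerModulus hη0.le, monotone_powerModulus hC hη0.le,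
    powerModulus_zero hη0.ne', powerModulus_nonneg hC, ?_⟩
  intro t t' ht0 _ ht'T k v hv τ hτ τ' hτ'
  have hM : ∀ ξ ∈ Icc t t', ‖v ξ‖ ≤ sSup ((fun ξ => ‖v ξ‖) '' Icc t t') :=
    fun ξ hξ => le_csSup (isCompact_Icc.bddAbove_image hv.norm) (mem_image_of_mem _ hξ)
  rcases le_total τ τ' with h | h
  · rw [abs_of_nonneg (sub_nonneg.2 h)]
    exact norm_weightedKernelIntegral_sub_le_powerModulus hβ0 hγ0 hγ1
      (le_max_right β γ) hκ1.le hη0.le hβη ht0 hτ.1 h (hτ'.2.trans ht'T)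
      (hv.mono (Icc_subset_Icc_right hτ'.2)) fun ξ hξ => hM ξ ⟨hξ.1, hξ.2.trans hτ'.2⟩
  · rw [norm_sub_rev, abs_sub_comm, abs_of_nonneg (sub_nonneg.2 h)]
    exact norm_weightedKernelIntegral_sub_le_powerModulus hβ0 hγ0 hγ1
      (le_max_right β γ) hκ1.le hη0.le hβη ht0 hτ'.1 h (hτ.2.trans ht'T)
      (hv.mono (Icc_subset_Icc_right hτ.2)) fun ξ hξ => hM ξ ⟨hξ.1, hξ.2.trans hτ.2⟩
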